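/- arXiv:1810.05607 — 2 statements merged into one kernel-verified Lean document; each statement's English description precedes it below -/
import Mathlib

section
/- For every real β > 2, the set of α ∈ [0,1) for which D(a) is bounded is dense in [0,1). -/
noncomputable section

namespace IntermediateBeta

/-- The intermediate beta transformation `x ↦ βx + α mod 1`. -/
def F (α β : ℝ) (x : ℝ) : ℝ := Int.fract (β * x + α)

/-- The digit sequence of a point: `Om α β x n` is the index `i` with `F^[n] x ∈ J_i`.
For `y ∈ [0,1)` we have `y ∈ J_i ↔ ⌊β y + α⌋ = i`. -/
def Om (α β : ℝ) (x : ℝ) : ℕ → ℕ := fun n => (⌊β * ((F α β)^[n] x) + α⌋).toNat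

/-- `ℓ = ⌈α + β⌉ - 1`. -/
def ell (α β : ℝ) : ℕ := ⌈α + β⌉₊ - 1

/-- The subshift `Σ`: closure (in the product topology) of the set of digit sequences
of points of `[0,1)`. -/
def Sig (α β : ℝ) : Set (ℕ → ℕ) := closure (Om α β '' Set.Ico (0 : ℝ) 1)

/-- The shift map. -/
def shift (x : ℕ → ℕ) : ℕ → ℕ := fun n => x (n + 1)

/-- Lexicographic order on one-sided sequences. -/
def lexLe (x y : ℕ → ℕ) : Prop := x = y ∨ ∃ k, (∀ i < k, x i = y i) ∧ x k < y k

/-- The language of a subset `S` of the full shift: the finite words occurring as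
initial segments of elements of `S`. -/
def langOf (S : Set (ℕ → ℕ)) (w : List ℕ) : Prop :=
  ∃ x ∈ S, ∀ i : Fin w.length, x i = w.get i

/-- Membership in the language `𝓛` of the subshift `Σ`. -/
def inLang (α β : ℝ) (w : List ℕ) : Prop := langOf (Sig α β) w

/-- The tail segment of `w` of length `k` agrees with the initial segment of `s`
of length `k`. -/
def tailAgrees (s : ℕ → ℕ) (w : List ℕ) (k : ℕ) : Prop :=
  k ≤ w.length ∧ ∀ i < k, w.getD (w.length - k + i) 0 = s i

/-- `kmax s w` is the length of the longest tail segment of `w` agreeing with an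
initial segment of `s` (`k₁(w)` when `s = a`, `k₂(w)` when `s = b`). -/
def kmax (s : ℕ → ℕ) (w : List ℕ) : ℕ := sSup {k | tailAgrees s w k}

/-- `D a b` is the set of lengths `n` such that the initial segment of `b` of
length `n` occurs somewhere in `a`.  Thus `D a b` is the set `𝖣(a)` of the paper
and `D b a` is `𝖣(b)`. -/
def D (a b : ℕ → ℕ) : Set ℕ := {n | ∃ j, ∀ i < n, b i = a (j + i)}

/-- Gluing of the words `w 0, v 0, w 1, v 1, …, v (n-1), w n`. -/
def glue {n : ℕ} (w : Fin (n + 1) → List ℕ) (v : Fin n → List ℕ) : List ℕ :=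
  (List.ofFn fun i : Fin n => w i.castSucc ++ v i).flatten ++ w (Fin.last n)

/-- A collection `G` of words inside the language `lang` has specification: there
is `τ ∈ ℕ` such that any finite list of words of `G` can be glued, with gluing
words from `lang` of length `τ`, into a word of `lang`. -/
def HasSpec (lang G : List ℕ → Prop) : Prop :=
  ∃ τ : ℕ, 1 ≤ τ ∧ ∀ n : ℕ, ∀ w : Fin (n + 1) → List ℕ, (∀ i, G (w i)) →
    ∃ v : Fin n → List ℕ, (∀ i, (v i).length = τ ∧ lang (v i)) ∧ lang (glue w v)

/-- The initial segment of a sequence, as a finite word. -/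
def pre (s : ℕ → ℕ) (n : ℕ) : List ℕ := List.ofFn fun i : Fin n => s i

/-- Lexicographic order for finite words (of equal length). -/
def wordLe (u v : List ℕ) : Prop :=
  u = v ∨ ∃ k, (∀ i < k, u.getD i 0 = v.getD i 0) ∧ u.getD k 0 < v.getD k 0

/-- Concatenation of a finite word with an infinite sequence. -/
def wcat (w : List ℕ) (x : ℕ → ℕ) : ℕ → ℕ := fun n =>
  if h : n < w.length then w.get ⟨n, h⟩ else x (n - w.length)

/-!
Parameters `α` for which `0` is periodic under `F` are dense: as long as the digits of the orbit
of `0` do not change, `F_α^[n] 0` moves with `α` at speed `1 + β + ⋯ + β ^ (n - 1)`, so in any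
interval of parameters some iterate reaches a discontinuity of `F`, where it becomes `0`.
For such `α` the sequence `a = Ω(0)` is periodic, hence `D(a)` is bounded unless `b` is a shift
of `a`, that is, the itinerary of a point `F^[r] 0`. But no itinerary of a point `y` is
lexicographically maximal in `Σ`: moving `y` a little to the right keeps its digits until the
gap, which grows like `β ^ n`, forces a larger digit.
-/

open Set Function Filter

lemma not_lexLe_of_lt {x y : ℕ → ℕ} {k : ℕ} (hagree : ∀ i < k, x i = y i) (hlt : y k < x k) :
    ¬ lexLe x y := by
  rintro (rfl | ⟨m, hm, hm_lt⟩)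
  · exact lt_irrefl _ hlt
  · rcases lt_trichotomy m k with h | rfl | h
    · have := hagree m h; omega
    · omega
    · have := hm k h; omega

section LexMax

variable (S : Set (ℕ → ℕ))

def lexMaxStage : ℕ → Set (ℕ → ℕ)
  | 0 => S
  | n + 1 => {x | x ∈ lexMaxStage n ∧ x n = sSup ((· n) '' lexMaxStage n)}

/-- The greedy lexicographic maximum of `S`: its `n`-th term is the largest `n`-th term of the
elements of `S` that agree with it before `n`. -/
def lexMaxSeq (n : ℕ) : ℕ := sSup ((· n) '' lexMaxStage S n)

variable {S}

lemma lexMaxStage_subset : ∀ n, lexMaxStage S n ⊆ S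
  | 0 => subset_rfl
  | n + 1 => fun _ hx => lexMaxStage_subset n hx.1

lemma bddAbove_image_lexMaxStage (hbdd : ∀ n, BddAbove ((· n) '' S)) (n : ℕ) :
    BddAbove ((· n) '' lexMaxStage S n) :=
  (hbdd n).mono (image_mono (lexMaxStage_subset n))

lemma lexMaxStage_nonempty (hne : S.Nonempty) (hbdd : ∀ n, BddAbove ((· n) '' S)) :
    ∀ n, (lexMaxStage S n).Nonempty
  | 0 => hne
  | n + 1 => by
    obtain ⟨x, hx, hxn⟩ := Nat.sSup_mem ((lexMaxStage_nonempty hne hbdd n).image _)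
      (bddAbove_image_lexMaxStage hbdd n)
    exact ⟨x, hx, hxn⟩

lemma eq_lexMaxSeq_of_mem_lexMaxStage {x : ℕ → ℕ} :
    ∀ {n}, x ∈ lexMaxStage S n → ∀ i < n, x i = lexMaxSeq S i
  | n + 1, ⟨hx, hxn⟩, i, hi => by
    rcases Nat.lt_succ_iff_lt_or_eq.1 hi with hi | rfl
    · exact eq_lexMaxSeq_of_mem_lexMaxStage hx i hi
    · exact hxn

lemma lexMaxSeq_mem (hS : IsClosed S) (hne : S.Nonempty) (hbdd : ∀ n, BddAbove ((· n) '' S)) :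
    lexMaxSeq S ∈ S := by
  choose x hx using lexMaxStage_nonempty hne hbdd
  have hlim : Tendsto x atTop (nhds (lexMaxSeq S)) := tendsto_pi_nhds.2 fun i =>
    (tendsto_const_nhds (x := lexMaxSeq S i)).congr'
      (eventually_atTop.2 ⟨i + 1, fun n hn => (eq_lexMaxSeq_of_mem_lexMaxStage (hx n) i hn).symm⟩)
  exact hS.mem_of_tendsto hlim (Eventually.of_forall fun n => lexMaxStage_subset n (hx n))

lemma lexLe_lexMaxSeq (hbdd : ∀ n, BddAbove ((· n) '' S)) {x : ℕ → ℕ} (hx : x ∈ S) :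
    lexLe x (lexMaxSeq S) := by
  classical
  by_cases heq : x = lexMaxSeq S
  · exact Or.inl heq
  have hex := Function.ne_iff.1 heq
  have hagree : ∀ i < Nat.find hex, x i = lexMaxSeq S i :=
    fun i hi => not_not.1 (Nat.find_min hex hi)
  have hmem : ∀ n ≤ Nat.find hex, x ∈ lexMaxStage S n := by
    intro n
    induction n with
    | zero => exact fun _ => hx
    | succ n ih => exact fun hn => ⟨ih (by omega), hagree n (by omega)⟩
  refine Or.inr ⟨Nat.find hex, hagree, lt_of_le_of_ne ?_ (Nat.find_spec hex)⟩
  exact le_csSup (bddAbove_image_lexMaxStage hbdd _) ⟨x, hmem _ le_rfl, rfl⟩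

theorem exists_lexMax (hS : IsClosed S) (hne : S.Nonempty) (hbdd : ∀ n, BddAbove ((· n) '' S)) :
    ∃ b ∈ S, ∀ x ∈ S, lexLe x b :=
  ⟨lexMaxSeq S, lexMaxSeq_mem hS hne hbdd, fun _ => lexLe_lexMaxSeq hbdd⟩

end LexMax

lemma bddAbove_D_of_periodic {a b : ℕ → ℕ} {p : ℕ} (ha : Periodic a p) (hp : 0 < p)
    (hb : ∀ r, ∃ i, b i ≠ a (r + i)) : BddAbove (D a b) := by
  choose f hf using hb
  refine ⟨(Finset.range p).sup f, fun n ⟨j, hj⟩ => ?_⟩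
  by_contra! hn
  have hjp : f (j % p) ≤ (Finset.range p).sup f :=
    Finset.le_sup (Finset.mem_range.2 (Nat.mod_lt j hp))
  apply hf (j % p)
  rw [hj _ (by omega), ← ha.map_mod_nat (j + _), ← ha.map_mod_nat (j % p + _), Nat.mod_add_mod]

lemma fract_add_of_floor_eq {a d : ℝ} (h : ⌊a + d⌋ = ⌊a⌋) :
    Int.fract (a + d) = Int.fract a + d := by
  rw [Int.fract, Int.fract, h]
  ring

lemma floor_add_eq_of_le {a d e : ℝ} (hd : 0 ≤ d) (hde : d ≤ e) (he : ⌊a + e⌋ = ⌊a⌋) :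
    ⌊a + d⌋ = ⌊a⌋ :=
  le_antisymm (he ▸ Int.floor_le_floor (by linarith)) (Int.floor_le_floor (by linarith))

lemma floor_add_ne_of_one_le {a d : ℝ} (hd : 1 ≤ d) : ⌊a + d⌋ ≠ ⌊a⌋ := by
  have := Int.floor_le_floor (show a + 1 ≤ a + d by linarith)
  rw [Int.floor_add_one] at this
  omega

lemma exists_first_floor_add_ne (A c : ℕ → ℝ) (h : ∃ n, 1 ≤ c n) :
    ∃ k, (∀ i < k, ⌊A i + c i⌋ = ⌊A i⌋) ∧ ⌊A k + c k⌋ ≠ ⌊A k⌋ := by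
  classical
  obtain ⟨n, hn⟩ := h
  have hex : ∃ k, ⌊A k + c k⌋ ≠ ⌊A k⌋ := ⟨n, floor_add_ne_of_one_le hn⟩
  exact ⟨Nat.find hex, fun i hi => not_not.1 (Nat.find_min hex hi), Nat.find_spec hex⟩

lemma exists_one_le_pow_mul {β η : ℝ} (hβ : 1 < β) (hη : 0 < η) : ∃ n, 1 ≤ β ^ n * η := by
  obtain ⟨n, hn⟩ := pow_unbounded_of_one_lt (1 / η) hβ
  exact ⟨n, ((div_lt_iff₀ hη).1 hn).le⟩

lemma iterate_F_mem_Ico {α β x : ℝ} (hx : x ∈ Ico (0 : ℝ) 1) : ∀ n, (F α β)^[n] x ∈ Ico (0 : ℝ) 1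
  | 0 => hx
  | n + 1 => by
    rw [iterate_succ_apply']
    exact ⟨Int.fract_nonneg _, Int.fract_lt_one _⟩

lemma Om_add (α β x : ℝ) (r i : ℕ) : Om α β x (r + i) = Om α β ((F α β)^[r] x) i := by
  simp only [Om, add_comm r i, iterate_add_apply]

lemma periodic_Om {α β x : ℝ} {p : ℕ} (hx : (F α β)^[p] x = x) : Periodic (Om α β x) p :=
  fun n => by rw [add_comm, Om_add α β, hx]

lemma Om_le_ell {α β x : ℝ} (hβ : 0 < β) (hx : x ∈ Ico (0 : ℝ) 1) (n : ℕ) :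
    Om α β x n ≤ ell α β := by
  have hy := iterate_F_mem_Ico (α := α) (β := β) hx n
  have ht : β * (F α β)^[n] x + α < α + β := by nlinarith [hy.2]
  simp only [Om, ell, Int.floor_toNat]
  rcases lt_or_ge 0 (α + β) with h | h
  · have := Nat.floor_lt_ceil_of_lt_of_pos ht h
    omega
  · rw [Nat.floor_eq_zero.2 (by linarith)]
    exact Nat.zero_le _

lemma Om_zero_mem_Sig (α β : ℝ) : Om α β 0 ∈ Sig α β :=
  subset_closure ⟨0, ⟨le_rfl, zero_lt_one⟩, rfl⟩

lemma le_ell_of_mem_Sig {α β : ℝ} (hβ : 0 < β) {g : ℕ → ℕ} (hg : g ∈ Sig α β) (n : ℕ) :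
    g n ≤ ell α β := by
  have hclosed : IsClosed {g : ℕ → ℕ | ∀ n, g n ≤ ell α β} := by
    simp only [Set.ofPred_forall]
    exact isClosed_iInter fun n => isClosed_le (continuous_apply n) continuous_const
  refine closure_minimal ?_ hclosed hg n
  rintro _ ⟨x, hx, rfl⟩
  exact Om_le_ell hβ hx

theorem exists_lexMax_Sig (α : ℝ) {β : ℝ} (hβ : 0 < β) : ∃ b ∈ Sig α β, ∀ x ∈ Sig α β, lexLe x b :=
  exists_lexMax isClosed_closure ⟨_, Om_zero_mem_Sig α β⟩
    fun n => ⟨ell α β, by rintro _ ⟨g, hg, rfl⟩; exact le_ell_of_mem_Sig hβ hg n⟩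

/-- While shifting the floor arguments by `c (i + 1)` does not change the digits, the orbit of `x'`
under `F α' β` follows the orbit of `x` under `F α β` at distance `c i`. -/
lemma mul_iterate_F_add_eq {α α' β x x' : ℝ} {c : ℕ → ℝ} (hc0 : x' = x + c 0)
    (hc : ∀ i, c (i + 1) = β * c i + (α' - α)) :
    ∀ n, (∀ i < n, ⌊β * (F α β)^[i] x + α + c (i + 1)⌋ = ⌊β * (F α β)^[i] x + α⌋) →
      β * (F α' β)^[n] x' + α' = β * (F α β)^[n] x + α + c (n + 1)
  | 0, _ => by
    rw [iterate_zero_apply, iterate_zero_apply, hc0, hc]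
    ring
  | n + 1, h => by
    have hstep : (F α' β)^[n + 1] x' = (F α β)^[n + 1] x + c (n + 1) := by
      rw [iterate_succ_apply', iterate_succ_apply', F, F,
        mul_iterate_F_add_eq hc0 hc n fun i hi => h i (by omega),
        fract_add_of_floor_eq (h n (by omega))]
    rw [hstep, hc (n + 1)]
    ring

lemma exists_Om_lexGt {α β y : ℝ} (hα : 0 ≤ α) (hβ : 1 < β) (hy : y ∈ Ico (0 : ℝ) 1) :
    ∃ x ∈ Ico (0 : ℝ) 1, ∃ k, (∀ i < k, Om α β x i = Om α β y i) ∧ Om α β y k < Om α β x k := by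
  set η := (1 - y) / 2 with hη_def
  have hη : 0 < η := by linarith [hy.2]
  set A : ℕ → ℝ := fun i => β * (F α β)^[i] y + α
  have harg := mul_iterate_F_add_eq (α := α) (α' := α) (β := β) (x := y) (x' := y + η)
    (c := fun i => β ^ i * η) (by rw [pow_zero, one_mul]) fun i => by ring
  obtain ⟨k, hagree, hchange⟩ := exists_first_floor_add_ne A (fun i => β ^ (i + 1) * η) <| by
    obtain ⟨n, hn⟩ := exists_one_le_pow_mul hβ (mul_pos (by linarith : (0 : ℝ) < β) hη)
    exact ⟨n, by rwa [pow_succ, mul_assoc]⟩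
  refine ⟨y + η, ⟨by linarith [hy.1], by linarith [hy.2]⟩, k, fun i hi => ?_, ?_⟩
  · simp only [Om]
    rw [harg i fun j hj => hagree j (by omega), hagree i hi]
  · simp only [Om]
    rw [harg k hagree]
    change (⌊A k⌋).toNat < (⌊A k + β ^ (k + 1) * η⌋).toNat
    have hA0 : 0 ≤ ⌊A k⌋ :=
      Int.floor_nonneg.2 (add_nonneg (mul_nonneg (by linarith) (iterate_F_mem_Ico hy k).1) hα)
    have hmono : ⌊A k⌋ ≤ ⌊A k + β ^ (k + 1) * η⌋ :=
      Int.floor_le_floor (le_add_of_nonneg_right (by positivity))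
    exact (Int.toNat_lt_toNat (by omega)).2 (lt_of_le_of_ne hmono (Ne.symm hchange))

lemma exists_iterate_F_eq_zero {β : ℝ} (hβ : 1 < β) (l : ℝ) {δ : ℝ} (hδ : 0 < δ) :
    ∃ γ ∈ Ioc l (l + δ), ∃ p, 0 < p ∧ (F γ β)^[p] 0 = 0 := by
  set s : ℕ → ℝ := fun i => ∑ j ∈ Finset.range i, β ^ j with hs
  have hs_succ : ∀ i, s (i + 1) = β * s i + 1 := fun i => geom_sum_succ
  have hs_nonneg : ∀ i, 0 ≤ s i := fun i => Finset.sum_nonneg fun j _ => by positivity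
  have hs_pos : ∀ i, 0 < s (i + 1) := fun i => by rw [hs_succ]; nlinarith [hs_nonneg i]
  set A : ℕ → ℝ := fun i => β * (F l β)^[i] 0 + l
  have harg : ∀ γ n, (∀ i < n, ⌊A i + s (i + 1) * (γ - l)⌋ = ⌊A i⌋) →
      β * (F γ β)^[n] 0 + γ = A n + s (n + 1) * (γ - l) :=
    fun γ => mul_iterate_F_add_eq (c := fun i => s i * (γ - l)) (by simp [hs])
      fun i => by rw [hs_succ]; ring
  obtain ⟨k, hagree, hchange⟩ := exists_first_floor_add_ne A (fun i => s (i + 1) * δ) <| by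
    obtain ⟨n, hn⟩ := exists_one_le_pow_mul hβ hδ
    have : β ^ n ≤ s (n + 1) :=
      Finset.single_le_sum (fun j _ => by positivity) (Finset.self_mem_range_succ n)
    exact ⟨n, hn.trans (by nlinarith)⟩
  -- the parameter at which the `k`-th floor argument first reaches the next integer
  set t := (⌊A k⌋ + 1 - A k) / s (k + 1)
  have ht_pos : 0 < t := div_pos (by linarith [Int.lt_floor_add_one (A k)]) (hs_pos k)
  have hst : s (k + 1) * t = ⌊A k⌋ + 1 - A k := mul_div_cancel₀ _ (hs_pos k).ne'
  have ht_le : t ≤ δ := by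
    have hlt : ⌊A k⌋ < ⌊A k + s (k + 1) * δ⌋ :=
      lt_of_le_of_ne (Int.floor_le_floor (by nlinarith [hs_pos k])) (Ne.symm hchange)
    have : ((⌊A k⌋ + 1 : ℤ) : ℝ) ≤ A k + s (k + 1) * δ := Int.le_floor.1 hlt
    push_cast at this
    exact le_of_mul_le_mul_left (by linarith) (hs_pos k)
  refine ⟨l + t, ⟨by linarith, by linarith⟩, k + 1, k.succ_pos, ?_⟩
  have hagree_t : ∀ i < k, ⌊A i + s (i + 1) * (l + t - l)⌋ = ⌊A i⌋ := fun i hi =>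
    floor_add_eq_of_le (by rw [add_sub_cancel_left]; exact mul_nonneg (hs_nonneg _) ht_pos.le)
      (by rw [add_sub_cancel_left]; exact mul_le_mul_of_nonneg_left ht_le (hs_nonneg _))
      (hagree i hi)
  rw [iterate_succ_apply', F, harg _ k hagree_t, add_sub_cancel_left, hst,
    show A k + (⌊A k⌋ + 1 - A k) = ((⌊A k⌋ + 1 : ℤ) : ℝ) by push_cast; ring, Int.fract_intCast]

lemma exists_near_iterate_F_eq_zero {β : ℝ} (hβ : 1 < β) {α : ℝ} (hα : α ∈ Ico (0 : ℝ) 1)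
    {ε : ℝ} (hε : 0 < ε) : ∃ γ ∈ Ico (0 : ℝ) 1, |γ - α| < ε ∧ ∃ p, 0 < p ∧ (F γ β)^[p] 0 = 0 := by
  obtain ⟨γ, ⟨hαγ, hγδ⟩, hp⟩ :=
    exists_iterate_F_eq_zero hβ α (lt_min (half_pos hε) (half_pos (sub_pos.2 hα.2)))
  have h1 := min_le_left (ε / 2) ((1 - α) / 2)
  have h2 := min_le_right (ε / 2) ((1 - α) / 2)
  refine ⟨γ, ⟨by linarith [hα.1], by linarith⟩, ?_, hp⟩
  rw [abs_sub_lt_iff]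
  constructor <;> linarith

lemma ne_Om_of_forall_lexLe {α β : ℝ} (hα : 0 ≤ α) (hβ : 1 < β) {b : ℕ → ℕ}
    (hb : ∀ x ∈ Sig α β, lexLe x b) {y : ℝ} (hy : y ∈ Ico (0 : ℝ) 1) : b ≠ Om α β y := by
  rintro rfl
  obtain ⟨x, hx, k, hagree, hlt⟩ := exists_Om_lexGt hα hβ hy
  exact not_lexLe_of_lt hagree hlt (hb _ (subset_closure ⟨x, hx, rfl⟩))

/-- **Theorem (denseness).** For every `β > 2` there is a dense set of `α ∈ [0,1)`
such that `𝖣(a)` is bounded (where `a = Ω(0)` and `b` is the lexicographic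
supremum of the subshift `Σ` associated to `(α, β)`). -/
theorem dense_bounded_Da (β : ℝ) (hβ : 2 < β) :
    ∀ α ∈ Set.Ico (0 : ℝ) 1, ∀ ε > (0 : ℝ), ∃ α' ∈ Set.Ico (0 : ℝ) 1, |α' - α| < ε ∧
      ∃ b : ℕ → ℕ, b ∈ Sig α' β ∧ (∀ x ∈ Sig α' β, lexLe x b) ∧
        BddAbove (D (Om α' β 0) b) := by
  intro α hα ε hε
  have hβ1 : 1 < β := by linarith
  obtain ⟨γ, hγ, hγα, p, hp, hper⟩ := exists_near_iterate_F_eq_zero hβ1 hα hε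
  obtain ⟨b, hbS, hbmax⟩ := exists_lexMax_Sig γ (by linarith : (0 : ℝ) < β)
  refine ⟨γ, hγ, hγα, b, hbS, hbmax, bddAbove_D_of_periodic (periodic_Om hper) hp fun r => ?_⟩
  obtain ⟨i, hi⟩ := Function.ne_iff.1
    (ne_Om_of_forall_lexLe hγ.1 hβ1 hbmax (iterate_F_mem_Ico ⟨le_rfl, zero_lt_one⟩ r))
  exact ⟨i, by rwa [Om_add γ β]⟩

end IntermediateBeta
end
end

section
/- Fix reals α, β with 0 ≤ α < 1 and β > 1. For every word w in the language 𝓛 of Σ, the follower set {x ∈ {0,…,ℓ}^ℕ : wx ∈ Σ} (where wx denotes the concatenation of w with the sequence x) equals {x ∈ Σ : σ^{k₁(w)}(a) ⪯ x ⪯ σ^{k₂(w)}(b)}. -/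
/-!
The points of `[0,1)` whose digit sequence starts with `w` are mapped by `F^|w|` onto an
interval `V w = [s, t)`: each letter `d` cuts the current interval with the branch `J_d`, on
which `F` is the increasing affine map `v ↦ βv + α - d`. Since `Ω` is lexicographically
monotone, `w x ∈ Σ` exactly when `x` lies in the closure of `Ω([s, t))`, i.e. when
`x ∈ Σ` lies between `Ω(s)` and the lexicographic supremum of `Ω([s, t))`.
Along `w`, letter by letter, `Ω(s)` is either shifted or reset to `Ω(0) = a`, and the supremum
is either shifted or reset to `b`; this is exactly how the longest suffixes of `w` agreeing
with a prefix of `a`, resp. `b`, evolve, because `a ⪯ σʲa` and `σʲb ⪯ b` rule out any other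
overlap after a mismatch.
-/

noncomputable section

namespace IntermediateBeta

open PiNat Pi Set

lemma lexLe_iff_toLex_le {x y : ℕ → ℕ} : lexLe x y ↔ toLex x ≤ toLex y := by
  rw [le_iff_eq_or_lt]
  rfl

lemma shift_iterate_apply (x : ℕ → ℕ) (j i : ℕ) : shift^[j] x i = x (j + i) := by
  induction j generalizing x with
  | zero => simp
  | succ j ih =>
    rw [Function.iterate_succ_apply, ih]
    exact congrArg x (by omega)

lemma continuous_shift : Continuous shift :=
  continuous_pi fun n => continuous_apply (n + 1)

lemma toLex_shift_iterate_le {x y : ℕ → ℕ} {k : ℕ} (h : toLex x ≤ toLex y)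
    (hk : ∀ i < k, x i = y i) : toLex (shift^[k] x) ≤ toLex (shift^[k] y) := by
  obtain h | ⟨j, hj, hlt⟩ := h.eq_or_lt
  · rw [toLex.injective h]
  · have hkj : k ≤ j := not_lt.1 fun hjk => hlt.ne (hk j hjk)
    refine le_of_lt ⟨j - k, fun i hi => ?_, ?_⟩
    · simpa only [toLex_apply, shift_iterate_apply] using hj (k + i) (by omega)
    · simpa only [toLex_apply, shift_iterate_apply, Nat.add_sub_cancel' hkj] using hlt

lemma mem_cylinder_of_toLex_le_of_le {x y z : ℕ → ℕ} {n : ℕ} (hxy : toLex x ≤ toLex y)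
    (hyz : toLex y ≤ toLex z) (hx : x ∈ cylinder z n) : y ∈ cylinder z n := by
  intro i
  induction i using Nat.strong_induction_on with
  | _ i ih =>
    intro hi
    have hyz_below : ∀ j < i, y j = z j := fun j hj => ih j hj (hj.trans hi)
    have h1 : x i ≤ y i := apply_le_of_toLex hxy fun j hj =>
      (hx j (hj.trans hi)).trans (hyz_below j hj).symm
    have h2 : y i ≤ z i := apply_le_of_toLex hyz hyz_below
    have h3 : x i = z i := hx i hi
    exact le_antisymm h2 (h3 ▸ h1)

lemma isOpen_setOf_toLex_lt (y : ℕ → ℕ) : IsOpen {x : ℕ → ℕ | toLex y < toLex x} := by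
  refine isOpen_iff_forall_mem_open.2 fun x ⟨k, hk, hlt⟩ =>
    ⟨cylinder x (k + 1), fun z hz => ⟨k, fun i hi => ?_, ?_⟩, isOpen_cylinder _ x _,
      self_mem_cylinder x _⟩
  · exact (hk i hi).trans (hz i (by omega)).symm
  · simpa only [toLex_apply, hz k (by omega)] using hlt

lemma isOpen_setOf_lt_toLex (y : ℕ → ℕ) : IsOpen {x : ℕ → ℕ | toLex x < toLex y} := by
  refine isOpen_iff_forall_mem_open.2 fun x ⟨k, hk, hlt⟩ =>
    ⟨cylinder x (k + 1), fun z hz => ⟨k, fun i hi => ?_, ?_⟩, isOpen_cylinder _ x _,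
      self_mem_cylinder x _⟩
  · exact (hz i (by omega)).trans (hk i hi)
  · simpa only [toLex_apply, hz k (by omega)] using hlt

lemma isClosed_setOf_toLex_le (y : ℕ → ℕ) : IsClosed {x : ℕ → ℕ | toLex x ≤ toLex y} := by
  convert (isOpen_setOf_toLex_lt y).isClosed_compl using 1
  ext x
  exact (not_lt (α := Lex (ℕ → ℕ))).symm

lemma isClosed_setOf_le_toLex (y : ℕ → ℕ) : IsClosed {x : ℕ → ℕ | toLex y ≤ toLex x} := by
  convert (isOpen_setOf_lt_toLex y).isClosed_compl using 1
  ext x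
  exact (not_lt (α := Lex (ℕ → ℕ))).symm

lemma mem_closure_iff_cylinder_inter_nonempty {S : Set (ℕ → ℕ)} {x : ℕ → ℕ} :
    x ∈ closure S ↔ ∀ n, (cylinder x n ∩ S).Nonempty := by
  rw [(isTopologicalBasis_cylinders fun _ => ℕ).mem_closure_iff]
  refine ⟨fun h n => h _ ⟨x, n, rfl⟩ (self_mem_cylinder x n), ?_⟩
  rintro h _ ⟨y, n, rfl⟩ hx
  rw [← mem_cylinder_iff_eq.1 hx]
  exact h n

lemma wcat_apply (w : List ℕ) (x : ℕ → ℕ) (i : ℕ) :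
    wcat w x i = if i < w.length then w.getD i 0 else x (i - w.length) := by
  unfold wcat
  split_ifs with h
  · rw [List.getD_eq_getElem _ _ h]
    rfl
  · rfl

lemma shift_iterate_wcat (w : List ℕ) (x : ℕ → ℕ) : shift^[w.length] (wcat w x) = x := by
  funext i
  rw [shift_iterate_apply, wcat_apply, if_neg (by omega), Nat.add_sub_cancel_left]

lemma wcat_append (u v : List ℕ) (x : ℕ → ℕ) : wcat (u ++ v) x = wcat u (wcat v x) := by
  funext i
  simp only [wcat_apply, List.length_append]
  split_ifs with h1 h2 h3 h2 h3
  · exact List.getD_append _ _ _ _ h2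
  · exact List.getD_append_right _ _ _ _ (not_lt.1 h2)
  · omega
  · omega
  · omega
  · rw [Nat.sub_sub]

lemma wcat_singleton_shift (y : ℕ → ℕ) : wcat [y 0] (shift y) = y := by
  funext i
  cases i <;> simp [wcat_apply, shift]

lemma continuous_wcat (w : List ℕ) : Continuous (wcat w) := by
  refine continuous_pi fun i => ?_
  unfold wcat
  split_ifs
  · exact continuous_const
  · exact continuous_apply _

lemma length_pre (s : ℕ → ℕ) (n : ℕ) : (pre s n).length = n :=
  List.length_ofFn

lemma pre_succ (s : ℕ → ℕ) (n : ℕ) : pre s (n + 1) = pre s n ++ [s n] := by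
  rw [pre, pre, List.ofFn_succ', List.concat_eq_append]
  rfl

lemma getD_pre {s : ℕ → ℕ} {n i : ℕ} (hi : i < n) : (pre s n).getD i 0 = s i := by
  simp [pre, hi]

lemma wcat_pre_apply_of_lt {s x : ℕ → ℕ} {n i : ℕ} (hi : i < n) : wcat (pre s n) x i = s i := by
  rw [wcat_apply, length_pre, if_pos hi, getD_pre hi]

lemma shift_iterate_wcat_pre (s x : ℕ → ℕ) (n : ℕ) : shift^[n] (wcat (pre s n) x) = x := by
  simpa only [length_pre] using shift_iterate_wcat (pre s n) x

lemma bddAbove_setOf_tailAgrees (s : ℕ → ℕ) (w : List ℕ) : BddAbove {k | tailAgrees s w k} :=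
  ⟨w.length, fun _ hk => hk.1⟩

lemma kmax_spec (s : ℕ → ℕ) (w : List ℕ) : tailAgrees s w (kmax s w) := by
  have h0 : tailAgrees s w 0 := ⟨Nat.zero_le _, fun i hi => absurd hi (Nat.not_lt_zero i)⟩
  exact Nat.sSup_mem ⟨0, h0⟩ (bddAbove_setOf_tailAgrees s w)

lemma le_kmax {s : ℕ → ℕ} {w : List ℕ} {k : ℕ} (h : tailAgrees s w k) : k ≤ kmax s w :=
  le_csSup (bddAbove_setOf_tailAgrees s w) h

lemma kmax_nil (s : ℕ → ℕ) : kmax s [] = 0 :=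
  Nat.le_zero.1 (kmax_spec s []).1

lemma shift_iterate_wcat_sub_kmax (s x : ℕ → ℕ) (w : List ℕ) :
    shift^[w.length - kmax s w] (wcat w x) = wcat (pre s (kmax s w)) x := by
  obtain ⟨hk, hagree⟩ := kmax_spec s w
  funext i
  rw [shift_iterate_apply, wcat_apply, wcat_apply, length_pre]
  split_ifs with h1 h2 h2
  · rw [hagree i h2, getD_pre h2]
  · omega
  · omega
  · congr 1
    omega

lemma tailAgrees_append_singleton_iff {s : ℕ → ℕ} {w : List ℕ} {d m : ℕ} :
    tailAgrees s (w ++ [d]) (m + 1) ↔ tailAgrees s w m ∧ d = s m := by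
  unfold tailAgrees
  rw [List.length_append, List.length_singleton, Nat.forall_lt_succ_right, Nat.add_sub_add_right]
  constructor
  · rintro ⟨hm, hlt, hlast⟩
    have hm' : m ≤ w.length := by omega
    refine ⟨⟨hm', fun i hi => ?_⟩, ?_⟩
    · have := hlt i hi
      rwa [List.getD_append _ _ _ _ (by omega)] at this
    · rw [Nat.sub_add_cancel hm', List.getD_append_right _ _ _ _ le_rfl, Nat.sub_self] at hlast
      simpa using hlast
  · rintro ⟨⟨hm, hlt⟩, rfl⟩
    refine ⟨by omega, fun i hi => ?_, ?_⟩
    · rw [List.getD_append _ _ _ _ (by omega)]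
      exact hlt i hi
    · rw [Nat.sub_add_cancel hm, List.getD_append_right _ _ _ _ le_rfl, Nat.sub_self]
      rfl

lemma kmax_append_singleton_le (s : ℕ → ℕ) (w : List ℕ) (d : ℕ) :
    kmax s (w ++ [d]) ≤ kmax s w + 1 := by
  cases h : kmax s (w ++ [d]) with
  | zero => omega
  | succ m =>
    have hspec := kmax_spec s (w ++ [d])
    rw [h, tailAgrees_append_singleton_iff] at hspec
    exact Nat.succ_le_succ (le_kmax hspec.1)

lemma kmax_append_singleton_of_eq {s : ℕ → ℕ} {w : List ℕ} {d : ℕ} (h : d = s (kmax s w)) :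
    kmax s (w ++ [d]) = kmax s w + 1 :=
  (kmax_append_singleton_le s w d).antisymm
    (le_kmax (tailAgrees_append_singleton_iff.2 ⟨kmax_spec s w, h⟩))

lemma exists_overlap_of_kmax_append_singleton_ne_zero {s : ℕ → ℕ} {w : List ℕ} {d : ℕ}
    (h0 : kmax s (w ++ [d]) ≠ 0) (hd : d ≠ s (kmax s w)) :
    ∃ j m, (∀ i < m, s (j + i) = s i) ∧ s m = d ∧ s (j + m) = s (kmax s w) := by
  obtain ⟨m, hm⟩ := Nat.exists_eq_add_one.2 (Nat.pos_of_ne_zero h0)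
  have hspec := kmax_spec s (w ++ [d])
  rw [hm, tailAgrees_append_singleton_iff] at hspec
  obtain ⟨⟨hmw, hmagree⟩, rfl⟩ := hspec
  obtain ⟨hkw, hkagree⟩ := kmax_spec s w
  have hmk : m < kmax s w := (le_kmax ⟨hmw, hmagree⟩).lt_of_ne (by rintro rfl; exact hd rfl)
  refine ⟨kmax s w - m, m, fun i hi => ?_, rfl, by rw [Nat.sub_add_cancel hmk.le]⟩
  rw [← hkagree _ (by omega), ← hmagree i hi]
  congr 1
  omega

lemma kmax_append_singleton_eq_zero_of_lt {s : ℕ → ℕ} {w : List ℕ} {d : ℕ}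
    (hmin : ∀ j, toLex s ≤ toLex (shift^[j] s)) (hd : s (kmax s w) < d) :
    kmax s (w ++ [d]) = 0 := by
  by_contra h0
  obtain ⟨j, m, hagree, rfl, hjm⟩ := exists_overlap_of_kmax_append_singleton_ne_zero h0 hd.ne'
  refine (hmin j).not_gt ⟨m, fun i hi => ?_, ?_⟩
  · simp only [toLex_apply, shift_iterate_apply, hagree i hi]
  · simpa only [toLex_apply, shift_iterate_apply, hjm] using hd

lemma kmax_append_singleton_eq_zero_of_gt {s : ℕ → ℕ} {w : List ℕ} {d : ℕ}
    (hmax : ∀ j, toLex (shift^[j] s) ≤ toLex s) (hd : d < s (kmax s w)) :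
    kmax s (w ++ [d]) = 0 := by
  by_contra h0
  obtain ⟨j, m, hagree, rfl, hjm⟩ := exists_overlap_of_kmax_append_singleton_ne_zero h0 hd.ne
  refine (hmax j).not_gt ⟨m, fun i hi => ?_, ?_⟩
  · simp only [toLex_apply, shift_iterate_apply, hagree i hi]
  · simpa only [toLex_apply, shift_iterate_apply, hjm] using hd

lemma toLex_shift_kmax_le {a x : ℕ → ℕ} {w : List ℕ}
    (h : toLex a ≤ toLex (shift^[w.length - kmax a w] (wcat w x))) :
    toLex (shift^[kmax a w] a) ≤ toLex x := by
  rw [shift_iterate_wcat_sub_kmax] at h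
  simpa only [shift_iterate_wcat_pre] using
    toLex_shift_iterate_le h fun i hi => (wcat_pre_apply_of_lt hi).symm

lemma toLex_le_shift_kmax {b x : ℕ → ℕ} {w : List ℕ}
    (h : toLex (shift^[w.length - kmax b w] (wcat w x)) ≤ toLex b) :
    toLex x ≤ toLex (shift^[kmax b w] b) := by
  rw [shift_iterate_wcat_sub_kmax] at h
  simpa only [shift_iterate_wcat_pre] using
    toLex_shift_iterate_le h fun i hi => wcat_pre_apply_of_lt hi

/-- By closedness of `{y | y ⪯ c}`, `c` is then the lexicographic maximum of `closure S`. -/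
def IsLexSup (S : Set (ℕ → ℕ)) (c : ℕ → ℕ) : Prop :=
  c ∈ closure S ∧ ∀ y ∈ S, toLex y ≤ toLex c

lemma IsLexSup.toLex_le {S : Set (ℕ → ℕ)} {c z : ℕ → ℕ} (h : IsLexSup S c)
    (hz : ∀ y ∈ S, toLex y ≤ toLex z) : toLex c ≤ toLex z :=
  closure_minimal hz (isClosed_setOf_toLex_le z) h.1

lemma IsLexSup.shift_image {S : Set (ℕ → ℕ)} {c : ℕ → ℕ} (h : IsLexSup S c) :
    IsLexSup (shift '' {y ∈ S | y 0 = c 0}) (shift c) := by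
  refine ⟨map_mem_closure continuous_shift
    ((isOpen_cylinder _ c 1).inter_closure ⟨self_mem_cylinder c 1, h.1⟩) ?_, ?_⟩
  · rintro y ⟨hy, hyS⟩
    exact ⟨y, ⟨hyS, hy 0 one_pos⟩, rfl⟩
  · rintro _ ⟨y, ⟨hyS, hy0⟩, rfl⟩
    exact toLex_shift_iterate_le (k := 1) (h.2 y hyS) fun i hi => by rwa [Nat.lt_one_iff.1 hi]

section Dynamics

variable {α β : ℝ}

lemma F_mem_Ico (x : ℝ) : F α β x ∈ Ico (0 : ℝ) 1 :=
  ⟨Int.fract_nonneg _, Int.fract_lt_one _⟩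

lemma Om_F (x : ℝ) : Om α β (F α β x) = shift (Om α β x) := rfl

lemma Om_zero_eq_iff (hα : 0 ≤ α) (hβ : 0 < β) {u : ℝ} (hu : 0 ≤ u) {d : ℕ} :
    Om α β u 0 = d ↔ (d : ℝ) ≤ β * u + α ∧ β * u + α < d + 1 := by
  have hfloor : (0 : ℤ) ≤ ⌊β * u + α⌋ := Int.floor_nonneg.2 (by positivity)
  have : Om α β u 0 = d ↔ ⌊β * u + α⌋ = d := by
    simp only [Om, Function.iterate_zero_apply]
    omega
  rw [this, Int.floor_eq_iff]
  push_cast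
  rfl

lemma F_eq_of_Om_zero_eq (hα : 0 ≤ α) (hβ : 0 < β) {u : ℝ} (hu : 0 ≤ u) {d : ℕ}
    (hd : Om α β u 0 = d) : F α β u = β * u + α - d := by
  have hfloor : ⌊β * u + α⌋ = d := by
    rw [Int.floor_eq_iff]
    exact_mod_cast (Om_zero_eq_iff hα hβ hu).1 hd
  rw [F, Int.fract, hfloor, Int.cast_natCast]

lemma Om_zero_mono (hβ : 0 ≤ β) {p q : ℝ} (hpq : p ≤ q) : Om α β p 0 ≤ Om α β q 0 :=
  Int.toNat_le_toNat (Int.floor_mono (by simp only [Function.iterate_zero_apply]; gcongr))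

lemma iterate_F_le_of_Om_eq (hα : 0 ≤ α) (hβ : 0 < β) (k : ℕ) {u v : ℝ} (hu : 0 ≤ u)
    (huv : u ≤ v) (h : ∀ i < k, Om α β u i = Om α β v i) : (F α β)^[k] u ≤ (F α β)^[k] v := by
  induction k generalizing u v with
  | zero => exact huv
  | succ k ih =>
    have hd := h 0 k.succ_pos
    refine ih (F_mem_Ico u).1 ?_ fun i hi => h (i + 1) (by omega)
    rw [F_eq_of_Om_zero_eq hα hβ hu rfl, F_eq_of_Om_zero_eq hα hβ (hu.trans huv) hd.symm]
    gcongr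

lemma toLex_Om_le (hα : 0 ≤ α) (hβ : 0 < β) {u v : ℝ} (hu : 0 ≤ u) (huv : u ≤ v) :
    toLex (Om α β u) ≤ toLex (Om α β v) := by
  by_contra hlt
  obtain ⟨k, hk, hlt⟩ := not_le.1 hlt
  have : Om α β u k ≤ Om α β v k :=
    Om_zero_mono hβ.le (iterate_F_le_of_Om_eq hα hβ k hu huv fun i hi => (hk i hi).symm)
  exact absurd hlt (not_lt.2 this)

lemma Om_mem_Sig {u : ℝ} (hu : u ∈ Ico (0 : ℝ) 1) : Om α β u ∈ Sig α β :=
  subset_closure (mem_image_of_mem _ hu)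

lemma shift_mem_Sig {x : ℕ → ℕ} (hx : x ∈ Sig α β) : shift x ∈ Sig α β :=
  map_mem_closure continuous_shift hx <| by
    rintro _ ⟨u, -, rfl⟩
    exact mem_image_of_mem _ (F_mem_Ico u)

lemma shift_iterate_mem_Sig {x : ℕ → ℕ} (hx : x ∈ Sig α β) (n : ℕ) : shift^[n] x ∈ Sig α β := by
  induction n with
  | zero => exact hx
  | succ n ih => exact Function.iterate_succ_apply' shift n x ▸ shift_mem_Sig ih

lemma toLex_Om_zero_le (hα : 0 ≤ α) (hβ : 0 < β) {x : ℕ → ℕ} (hx : x ∈ Sig α β) :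
    toLex (Om α β 0) ≤ toLex x :=
  closure_minimal (by rintro _ ⟨u, hu, rfl⟩; exact toLex_Om_le hα hβ le_rfl hu.1)
    (isClosed_setOf_le_toLex _) hx

lemma mem_closure_Om_Ico_of_toLex_le (hα : 0 ≤ α) (hβ : 0 < β) {p s t : ℝ} {x : ℕ → ℕ}
    (hp : 0 ≤ p) (hst : s < t) (hx : x ∈ closure (Om α β '' Ico p t))
    (hsx : toLex (Om α β s) ≤ toLex x) : x ∈ closure (Om α β '' Ico s t) := by
  rw [mem_closure_iff_cylinder_inter_nonempty] at hx ⊢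
  intro n
  obtain ⟨_, hy, u, hu, rfl⟩ := hx n
  by_cases hsu : s ≤ u
  · exact ⟨_, hy, u, ⟨hsu, hu.2⟩, rfl⟩
  · refine ⟨Om α β s, ?_, s, ⟨le_rfl, hst⟩, rfl⟩
    exact mem_cylinder_of_toLex_le_of_le (toLex_Om_le hα hβ (hp.trans hu.1) (not_le.1 hsu).le)
      hsx hy

lemma mem_closure_Om_Ico_of_toLex_le_of_isLexSup (hα : 0 ≤ α) (hβ : 0 < β) {s t q : ℝ}
    {x c : ℕ → ℕ} (hs : 0 ≤ s) (hc : IsLexSup (Om α β '' Ico s t) c)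
    (hx : x ∈ closure (Om α β '' Ico s q)) (hxc : toLex x ≤ toLex c) :
    x ∈ closure (Om α β '' Ico s t) := by
  rw [mem_closure_iff_cylinder_inter_nonempty] at hx ⊢
  intro n
  obtain ⟨_, hy, u, hu, rfl⟩ := hx n
  by_cases hut : u < t
  · exact ⟨_, hy, u, ⟨hu.1, hut⟩, rfl⟩
  have hcu : toLex c ≤ toLex (Om α β u) := hc.toLex_le <| by
    rintro _ ⟨z, hz, rfl⟩
    exact toLex_Om_le hα hβ (hs.trans hz.1) (hz.2.le.trans (not_lt.1 hut))
  have hc_cyl : c ∈ cylinder (Om α β u) n :=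
    mem_cylinder_of_toLex_le_of_le hxc hcu ((mem_cylinder_comm _ _ _).1 hy)
  rw [← mem_cylinder_iff_eq.1 hy, ← mem_cylinder_iff_eq.1 hc_cyl]
  exact mem_closure_iff_cylinder_inter_nonempty.1 hc.1 n

lemma isLexSup_Om_Ico_of_mem_Sig {b : ℕ → ℕ} (hα : 0 ≤ α) (hβ : 0 < β) (hb : b ∈ Sig α β)
    (hbsup : ∀ y ∈ Sig α β, toLex y ≤ toLex b) {s : ℝ} (hs : s ∈ Ico (0 : ℝ) 1) :
    IsLexSup (Om α β '' Ico s 1) b := by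
  refine ⟨mem_closure_Om_Ico_of_toLex_le hα hβ le_rfl hs.2 hb (hbsup _ (Om_mem_Sig hs)), ?_⟩
  rintro _ ⟨u, hu, rfl⟩
  exact hbsup _ (Om_mem_Sig ⟨hs.1.trans hu.1, hu.2⟩)

lemma F_image_sep_Om_zero_eq (hα : 0 ≤ α) (hβ : 0 < β) {s : ℝ} (hs : 0 ≤ s) (t : ℝ) (d : ℕ) :
    F α β '' {v ∈ Ico s t | Om α β v 0 = d} =
      Ico (max (β * s + α - d) 0) (min (β * t + α - d) 1) := by
  ext y
  simp only [mem_image, mem_Ico, max_le_iff, lt_min_iff]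
  constructor
  · rintro ⟨v, ⟨⟨hsv, hvt⟩, hd⟩, rfl⟩
    have hdig := (Om_zero_eq_iff hα hβ (hs.trans hsv)).1 hd
    rw [F_eq_of_Om_zero_eq hα hβ (hs.trans hsv) hd]
    refine ⟨⟨?_, by linarith⟩, ?_, by linarith⟩
    · nlinarith
    · nlinarith
  · rintro ⟨⟨hsy, hy0⟩, hyt, hy1⟩
    have hv : β * ((y + d - α) / β) = y + d - α := mul_div_cancel₀ _ hβ.ne'
    have hsv : s ≤ (y + d - α) / β := by
      rw [le_div_iff₀ hβ]; linarith
    have hd : Om α β ((y + d - α) / β) 0 = d :=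
      (Om_zero_eq_iff hα hβ (hs.trans hsv)).2 ⟨by linarith, by linarith⟩
    refine ⟨(y + d - α) / β, ⟨⟨hsv, ?_⟩, hd⟩, ?_⟩
    · rw [div_lt_iff₀ hβ]; linarith
    · rw [F_eq_of_Om_zero_eq hα hβ (hs.trans hsv) hd, hv]
      ring

/-- `V w` is the image under `F^|w|` of the points of `[0,1)` whose digit sequence starts
with `w`. -/
def V (α β : ℝ) (w : List ℕ) : Set ℝ :=
  w.foldl (fun S d => F α β '' {v ∈ S | Om α β v 0 = d}) (Ico 0 1)

def lowerEnd (α β : ℝ) (w : List ℕ) : ℝ :=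
  w.foldl (fun s (d : ℕ) => max (β * s + α - d) 0) 0

def upperEnd (α β : ℝ) (w : List ℕ) : ℝ :=
  w.foldl (fun t (d : ℕ) => min (β * t + α - d) 1) 1

lemma V_append_singleton (w : List ℕ) (d : ℕ) :
    V α β (w ++ [d]) = F α β '' {v ∈ V α β w | Om α β v 0 = d} :=
  List.foldl_concat _ _ _ _

lemma lowerEnd_append_singleton (w : List ℕ) (d : ℕ) :
    lowerEnd α β (w ++ [d]) = max (β * lowerEnd α β w + α - d) 0 :=
  List.foldl_concat _ _ _ _

lemma upperEnd_append_singleton (w : List ℕ) (d : ℕ) :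
    upperEnd α β (w ++ [d]) = min (β * upperEnd α β w + α - d) 1 :=
  List.foldl_concat _ _ _ _

lemma lowerEnd_nonneg (w : List ℕ) : 0 ≤ lowerEnd α β w := by
  induction w using List.reverseRecOn with
  | nil => exact le_rfl
  | append_singleton w d _ => exact (lowerEnd_append_singleton w d).symm ▸ le_max_right _ _

lemma V_eq_Ico (hα : 0 ≤ α) (hβ : 0 < β) (w : List ℕ) :
    V α β w = Ico (lowerEnd α β w) (upperEnd α β w) := by
  induction w using List.reverseRecOn with
  | nil => rfl
  | append_singleton w d ih =>
    rw [V_append_singleton, ih, F_image_sep_Om_zero_eq hα hβ (lowerEnd_nonneg w),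
      lowerEnd_append_singleton, upperEnd_append_singleton]

lemma V_subset_Ico (w : List ℕ) : V α β w ⊆ Ico 0 1 := by
  induction w using List.reverseRecOn with
  | nil => exact subset_rfl
  | append_singleton w d _ =>
    rw [V_append_singleton]
    rintro _ ⟨v, -, rfl⟩
    exact F_mem_Ico v

lemma iterate_F_mem_V {u : ℝ} (hu : u ∈ Ico (0 : ℝ) 1) (n : ℕ) :
    (F α β)^[n] u ∈ V α β (pre (Om α β u) n) := by
  induction n with
  | zero => exact hu
  | succ n ih =>
    rw [pre_succ, V_append_singleton, Function.iterate_succ_apply']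
    exact mem_image_of_mem _ ⟨ih, rfl⟩

lemma wcat_Om_mem_image {w : List ℕ} {v : ℝ} (hv : v ∈ V α β w) :
    wcat w (Om α β v) ∈ Om α β '' Ico 0 1 := by
  induction w using List.reverseRecOn generalizing v with
  | nil => exact mem_image_of_mem _ hv
  | append_singleton w d ih =>
    rw [V_append_singleton] at hv
    obtain ⟨v, ⟨hv, rfl⟩, rfl⟩ := hv
    rw [wcat_append, Om_F, wcat_singleton_shift]
    exact ih hv

lemma V_nonempty_of_inLang {w : List ℕ} (hw : inLang α β w) : (V α β w).Nonempty := by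
  obtain ⟨z, hz, hzw⟩ := hw
  obtain ⟨_, hcyl, u, hu, rfl⟩ :=
    mem_closure_iff_cylinder_inter_nonempty.1 hz w.length
  have hpre : pre (Om α β u) w.length = w := by
    refine List.ext_get (length_pre _ _) fun i _ hi => ?_
    simpa [pre] using (hcyl i hi).trans (hzw ⟨i, hi⟩)
  exact ⟨_, hpre ▸ iterate_F_mem_V hu w.length⟩

lemma wcat_mem_Sig_of_mem_closure {w : List ℕ} {x : ℕ → ℕ}
    (hx : x ∈ closure (Om α β '' V α β w)) : wcat w x ∈ Sig α β :=
  map_mem_closure (continuous_wcat w) hx <| by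
    rintro _ ⟨v, hv, rfl⟩
    exact wcat_Om_mem_image hv

lemma image_Om_V_append_singleton (w : List ℕ) (d : ℕ) :
    Om α β '' V α β (w ++ [d]) = shift '' {y ∈ Om α β '' V α β w | y 0 = d} := by
  rw [V_append_singleton, image_image]
  ext y
  constructor
  · rintro ⟨v, ⟨hv, hvd⟩, rfl⟩
    exact ⟨Om α β v, ⟨mem_image_of_mem _ hv, hvd⟩, rfl⟩
  · rintro ⟨_, ⟨⟨v, hv, rfl⟩, hvd⟩, rfl⟩
    exact ⟨v, ⟨hv, hvd⟩, rfl⟩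

lemma upperEnd_append_singleton_eq_one (hα : 0 ≤ α) (hβ : 0 < β) {w : List ℕ} {d : ℕ} {v : ℝ}
    (hv : v ∈ V α β w) (hd : d < Om α β v 0) : upperEnd α β (w ++ [d]) = 1 := by
  rw [V_eq_Ico hα hβ] at hv
  have hdig := (Om_zero_eq_iff hα hβ ((lowerEnd_nonneg w).trans hv.1)).1 rfl
  have hd' : (d : ℝ) + 1 ≤ Om α β v 0 := by exact_mod_cast hd
  rw [upperEnd_append_singleton, min_eq_right]
  nlinarith [hv.2]

theorem Om_lowerEnd (hα : 0 ≤ α) (hβ : 0 < β) (w : List ℕ) (hw : (V α β w).Nonempty) :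
    Om α β (lowerEnd α β w) = shift^[kmax (Om α β 0) w] (Om α β 0) := by
  induction w using List.reverseRecOn with
  | nil => rw [kmax_nil]; rfl
  | append_singleton w d ih =>
    rw [V_append_singleton] at hw
    obtain ⟨_, v, ⟨hv, hvd⟩, rfl⟩ := hw
    set a := Om α β 0
    set s := lowerEnd α β w
    have ih := ih ⟨v, hv⟩
    have hs : 0 ≤ s := lowerEnd_nonneg w
    have hs0 : Om α β s 0 = a (kmax a w) := by rw [ih, shift_iterate_apply, Nat.add_zero]
    have hd : a (kmax a w) ≤ d := hs0 ▸ hvd ▸ Om_zero_mono hβ.le (V_eq_Ico hα hβ w ▸ hv).1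
    rw [lowerEnd_append_singleton]
    obtain hd | hd := hd.eq_or_lt
    · have hFs : F α β s = β * s + α - d := F_eq_of_Om_zero_eq hα hβ hs (hs0.trans hd)
      rw [max_eq_left (hFs ▸ (F_mem_Ico s).1), ← hFs, Om_F, ih,
        kmax_append_singleton_of_eq hd.symm, Function.iterate_succ_apply']
    · have hmin : ∀ j, toLex a ≤ toLex (shift^[j] a) := fun j =>
        toLex_Om_zero_le hα hβ (shift_iterate_mem_Sig (Om_mem_Sig ⟨le_rfl, one_pos⟩) j)
      have hdig := ((Om_zero_eq_iff hα hβ hs).1 hs0).2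
      have hd' : (a (kmax a w) : ℝ) + 1 ≤ d := by exact_mod_cast hd
      rw [max_eq_right (by linarith), kmax_append_singleton_eq_zero_of_lt hmin hd]
      rfl

theorem isLexSup_V (hα : 0 ≤ α) (hβ : 0 < β) {b : ℕ → ℕ} (hb : b ∈ Sig α β)
    (hbsup : ∀ y ∈ Sig α β, toLex y ≤ toLex b) (w : List ℕ) (hw : (V α β w).Nonempty) :
    IsLexSup (Om α β '' V α β w) (shift^[kmax b w] b) := by
  induction w using List.reverseRecOn with
  | nil =>
    rw [kmax_nil]
    exact isLexSup_Om_Ico_of_mem_Sig hα hβ hb hbsup ⟨le_rfl, one_pos⟩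
  | append_singleton w d ih =>
    obtain ⟨_, v, ⟨hv, hvd⟩, rfl⟩ := V_append_singleton w d ▸ hw
    set c := shift^[kmax b w] b
    have ih := ih ⟨v, hv⟩
    have hc0 : c 0 = b (kmax b w) := shift_iterate_apply b _ 0
    have hd : d ≤ c 0 := hvd ▸ apply_le_of_toLex (ih.2 _ (mem_image_of_mem _ hv)) (i := 0)
      fun j hj => absurd hj (Nat.not_lt_zero j)
    obtain hd | hd := hd.eq_or_lt
    · rw [kmax_append_singleton_of_eq (hd.trans hc0), Function.iterate_succ_apply',
        image_Om_V_append_singleton, hd]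
      exact ih.shift_image
    · obtain ⟨_, hcyl, v', hv', rfl⟩ := mem_closure_iff_cylinder_inter_nonempty.1 ih.1 1
      have hv'd : d < Om α β v' 0 := (hcyl 0 one_pos).symm ▸ hd
      rw [kmax_append_singleton_eq_zero_of_gt (fun j => hbsup _ (shift_iterate_mem_Sig hb j))
        (hc0 ▸ hd), Function.iterate_zero_apply]
      rw [V_eq_Ico hα hβ, upperEnd_append_singleton_eq_one hα hβ hv' hv'd] at hw ⊢
      exact isLexSup_Om_Ico_of_mem_Sig hα hβ hb hbsup ⟨lowerEnd_nonneg _, nonempty_Ico.1 hw⟩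

end Dynamics

theorem follower_set_eq_general (α β : ℝ) (hα0 : 0 ≤ α) (hβ : 1 < β)
    (b : ℕ → ℕ) (hb : b ∈ Sig α β) (hbsup : ∀ y ∈ Sig α β, lexLe y b)
    (w : List ℕ) (hw : inLang α β w) :
    {x : ℕ → ℕ | wcat w x ∈ Sig α β} =
      {x ∈ Sig α β |
        lexLe (shift^[kmax (Om α β 0) w] (Om α β 0)) x ∧
        lexLe x (shift^[kmax b w] b)} := by
  have hβ0 : 0 < β := by linarith
  simp only [lexLe_iff_toLex_le] at hbsup ⊢
  ext x
  refine ⟨fun hwx => ⟨?_, ?_, ?_⟩, fun ⟨hx, hax, hxb⟩ => ?_⟩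
  · simpa only [shift_iterate_wcat] using shift_iterate_mem_Sig hwx w.length
  · exact toLex_shift_kmax_le (toLex_Om_zero_le hα0 hβ0 (shift_iterate_mem_Sig hwx _))
  · exact toLex_le_shift_kmax (hbsup _ (shift_iterate_mem_Sig hwx _))
  · have hV := V_nonempty_of_inLang hw
    have hsup := isLexSup_V hα0 hβ0 hb hbsup w hV
    rw [← Om_lowerEnd hα0 hβ0 w hV] at hax
    obtain ⟨u, hu⟩ := hV
    have hs1 : lowerEnd α β w < 1 := (V_eq_Ico hα0 hβ0 w ▸ hu).1.trans_lt (V_subset_Ico w hu).2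
    rw [V_eq_Ico hα0 hβ0] at hsup
    refine wcat_mem_Sig_of_mem_closure (V_eq_Ico hα0 hβ0 w ▸ ?_)
    exact mem_closure_Om_Ico_of_toLex_le_of_isLexSup hα0 hβ0 (lowerEnd_nonneg w) hsup
      (mem_closure_Om_Ico_of_toLex_le hα0 hβ0 le_rfl hs1 hx hax) hxb

/-- **Follower set description.** For `0 ≤ α < 1` and `β > 1` and every word `w`
of the language `𝓛` of `Σ`, the follower set `{x : wx ∈ Σ}` equals
`{x ∈ Σ : σ^{k₁(w)}(a) ⪯ x ⪯ σ^{k₂(w)}(b)}`. -/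
theorem follower_set_eq (α β : ℝ) (hα0 : 0 ≤ α) (hα1 : α < 1) (hβ : 1 < β)
    (b : ℕ → ℕ) (hb : b ∈ Sig α β) (hbsup : ∀ y ∈ Sig α β, lexLe y b)
    (w : List ℕ) (hw : inLang α β w) :
    {x : ℕ → ℕ | wcat w x ∈ Sig α β} =
      {x ∈ Sig α β |
        lexLe (shift^[kmax (Om α β 0) w] (Om α β 0)) x ∧
        lexLe x (shift^[kmax b w] b)} :=
  follower_set_eq_general α β hα0 hβ b hb hbsup w hw

end IntermediateBeta
end
end
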